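/- arXiv:chao-dyn/9607016 — 2 statements merged into one kernel-verified Lean document; each statement's English description precedes it below -/
import Mathlib

section
/- Let u : ℝ → ℝ be twice continuously differentiable on [0,1] with u(0) = 0 and u(1) = 0. Then ∫₀¹ u'(x)³ dx ≤ 2√2 · (∫₀¹ u(x)² dx)^{1/4} · (∫₀¹ u'(x)² dx)^{3/4} · (∫₀¹ u''(x)² dx)^{1/2}. -/
/-!
Integrating `(u u'²)' = u'³ + 2 u u' u''` gives `∫ u'³ = -2 ∫ u u' u''`, which Cauchy–Schwarz bounds
by `2 ‖u u'‖₂ ‖u''‖₂`. Finally `‖u u'‖₂² ≤ ‖u‖∞² ‖u'‖₂²`, and since `u 0 = 0`,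
`u x² = ∫₀ˣ 2 u u' ≤ 2 ‖u‖₂ ‖u'‖₂` for every `x`.
-/

open MeasureTheory Set intervalIntegral

section

variable {a b : ℝ} {f g u u' u'' : ℝ → ℝ}

theorem integral_abs_mul_abs_le_sqrt_mul_sqrt (hab : a ≤ b) (hf : ContinuousOn f (Icc a b))
    (hg : ContinuousOn g (Icc a b)) :
    ∫ x in a..b, |f x| * |g x| ≤ √(∫ x in a..b, f x ^ 2) * √(∫ x in a..b, g x ^ 2) := by
  have memLp : ∀ {h : ℝ → ℝ}, ContinuousOn h (Icc a b) →
      MemLp h (ENNReal.ofReal 2) (volume.restrict (Ioc a b)) := fun {h} hh => by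
    obtain ⟨C, hC⟩ := isCompact_Icc.exists_bound_of_continuousOn hh
    refine MemLp.of_bound ((hh.mono Ioc_subset_Icc_self).aestronglyMeasurable measurableSet_Ioc)
      C ?_
    filter_upwards [ae_restrict_mem measurableSet_Ioc] with x hx
    exact hC x (Ioc_subset_Icc_self hx)
  have := integral_mul_norm_le_Lp_mul_Lq Real.HolderConjugate.two_two (memLp hf) (memLp hg)
  simpa only [Real.norm_eq_abs, Real.rpow_two, sq_abs, Real.sqrt_eq_rpow,
    ← integral_of_le hab] using this

theorem integral_eq_sub_of_hasDerivWithinAt_Icc (hab : a ≤ b)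
    (hu : ∀ x ∈ Icc a b, HasDerivWithinAt u (u' x) (Icc a b) x)
    (hint : IntervalIntegrable u' volume a b) : ∫ x in a..b, u' x = u b - u a :=
  integral_eq_sub_of_hasDerivAt_of_le hab (HasDerivWithinAt.continuousOn hu)
    (fun x hx => (hu x (Ioo_subset_Icc_self hx)).hasDerivAt (Icc_mem_nhds hx.1 hx.2)) hint

theorem sq_le_two_mul_integral_abs_mul_abs_deriv (hab : a ≤ b)
    (hu : ∀ x ∈ Icc a b, HasDerivWithinAt u (u' x) (Icc a b) x)
    (hu' : ContinuousOn u' (Icc a b)) (ha : u a = 0) {x : ℝ} (hx : x ∈ Icc a b) :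
    u x ^ 2 ≤ 2 * ∫ t in a..b, |u t| * |u' t| := by
  have hsub : Icc a x ⊆ Icc a b := Icc_subset_Icc_right hx.2
  have hcont : ContinuousOn u (Icc a b) := HasDerivWithinAt.continuousOn hu
  have hint : ∀ {c}, c ∈ Icc a b → ∀ {h : ℝ → ℝ}, ContinuousOn h (Icc a b) →
      IntervalIntegrable h volume a c := fun hc _ hh =>
    (hh.mono (Icc_subset_Icc_right hc.2)).intervalIntegrable_of_Icc hc.1
  have hb : b ∈ Icc a b := ⟨hab, le_rfl⟩
  have ftc : ∫ t in a..x, 2 * u t * u' t = u x ^ 2 := by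
    rw [integral_eq_sub_of_hasDerivWithinAt_Icc (u := fun t => u t ^ 2)
      (u' := fun t => 2 * u t * u' t) hx.1
      (fun t ht => (((hu t (hsub ht)).mono hsub).pow 2).congr_deriv (by push_cast; ring))
      (hint hx ((continuousOn_const.mul hcont).mul hu')), ha]
    ring
  calc u x ^ 2 = ∫ t in a..x, 2 * u t * u' t := ftc.symm
    _ ≤ ∫ t in a..x, 2 * (|u t| * |u' t|) :=
      integral_mono_on hx.1 (hint hx ((continuousOn_const.mul hcont).mul hu'))
        (hint hx (continuousOn_const.mul (hcont.abs.mul hu'.abs))) fun t _ => by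
          rw [mul_assoc, ← abs_mul]; exact mul_le_mul_of_nonneg_left (le_abs_self _) two_pos.le
    _ ≤ ∫ t in a..b, 2 * (|u t| * |u' t|) :=
      integral_mono_interval le_rfl hx.1 hx.2 (.of_forall fun t => by positivity)
        (hint hb (continuousOn_const.mul (hcont.abs.mul hu'.abs)))
    _ = 2 * ∫ t in a..b, |u t| * |u' t| := integral_const_mul _ _

theorem integral_sq_mul_deriv_sq_le (hab : a ≤ b)
    (hu : ∀ x ∈ Icc a b, HasDerivWithinAt u (u' x) (Icc a b) x)
    (hu' : ContinuousOn u' (Icc a b)) (ha : u a = 0) :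
    ∫ x in a..b, (u x * u' x) ^ 2 ≤
      2 * (√(∫ x in a..b, u x ^ 2) * √(∫ x in a..b, u' x ^ 2)) * ∫ x in a..b, u' x ^ 2 := by
  have hcont : ContinuousOn u (Icc a b) := HasDerivWithinAt.continuousOn hu
  have hsup : ∀ x ∈ Icc a b, u x ^ 2 ≤ 2 * (√(∫ x in a..b, u x ^ 2) * √(∫ x in a..b, u' x ^ 2)) :=
    fun x hx => (sq_le_two_mul_integral_abs_mul_abs_deriv hab hu hu' ha hx).trans <|
      mul_le_mul_of_nonneg_left (integral_abs_mul_abs_le_sqrt_mul_sqrt hab hcont hu') two_pos.le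
  rw [← intervalIntegral.integral_const_mul]
  refine integral_mono_on hab (((hcont.mul hu').pow 2).intervalIntegrable_of_Icc hab)
    (((hu'.pow 2).intervalIntegrable_of_Icc (μ := volume) hab).const_mul _) fun x hx => ?_
  rw [mul_pow]
  exact mul_le_mul_of_nonneg_right (hsup x hx) (sq_nonneg _)

theorem integral_deriv_pow_three_eq (hab : a ≤ b)
    (hu : ∀ x ∈ Icc a b, HasDerivWithinAt u (u' x) (Icc a b) x)
    (hu' : ∀ x ∈ Icc a b, HasDerivWithinAt u' (u'' x) (Icc a b) x)
    (hu'' : ContinuousOn u'' (Icc a b)) (ha : u a = 0) (hb : u b = 0) :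
    ∫ x in a..b, u' x ^ 3 = -(2 * ∫ x in a..b, u x * u' x * u'' x) := by
  have hcont : ContinuousOn u (Icc a b) := HasDerivWithinAt.continuousOn hu
  have hcont' : ContinuousOn u' (Icc a b) := HasDerivWithinAt.continuousOn hu'
  have hcube : IntervalIntegrable (fun x => u' x ^ 3) volume a b :=
    (hcont'.pow 3).intervalIntegrable_of_Icc hab
  have hcross : IntervalIntegrable (fun x => u x * u' x * u'' x) volume a b :=
    ((hcont.mul hcont').mul hu'').intervalIntegrable_of_Icc hab
  have ftc := integral_eq_sub_of_hasDerivWithinAt_Icc (u := fun x => u x * u' x ^ 2)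
    (u' := fun x => u' x ^ 3 + 2 * (u x * u' x * u'' x)) hab
    (fun x hx => ((hu x hx).mul ((hu' x hx).pow 2)).congr_deriv
      (by push_cast [Pi.pow_apply]; ring))
    (hcube.add (hcross.const_mul 2))
  rw [integral_add hcube (hcross.const_mul 2), intervalIntegral.integral_const_mul, ha, hb] at ftc
  linarith

end

/-- If `u` is twice continuously differentiable on `[0,1]` with `u 0 = 0` and `u 1 = 0`,
then `∫₀¹ u'³ ≤ 2√2 (∫₀¹ u²)^{1/4} (∫₀¹ u'²)^{3/4} (∫₀¹ u''²)^{1/2}`. -/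
theorem integral_deriv_cubed_bound (u u' u'' : ℝ → ℝ)
    (hderiv : ∀ x ∈ Set.Icc (0:ℝ) 1, HasDerivWithinAt u (u' x) (Set.Icc (0:ℝ) 1) x)
    (hderiv' : ∀ x ∈ Set.Icc (0:ℝ) 1, HasDerivWithinAt u' (u'' x) (Set.Icc (0:ℝ) 1) x)
    (hcont : ContinuousOn u'' (Set.Icc (0:ℝ) 1))
    (h0 : u 0 = 0) (h1 : u 1 = 0) :
    ∫ x in (0:ℝ)..1, (u' x) ^ 3 ≤
      2 * Real.sqrt 2 * (∫ x in (0:ℝ)..1, (u x) ^ 2) ^ ((1:ℝ)/4) *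
        (∫ x in (0:ℝ)..1, (u' x) ^ 2) ^ ((3:ℝ)/4) *
        (∫ x in (0:ℝ)..1, (u'' x) ^ 2) ^ ((1:ℝ)/2) := by
  have hu : ContinuousOn u (Icc (0:ℝ) 1) := HasDerivWithinAt.continuousOn hderiv
  have hu' : ContinuousOn u' (Icc (0:ℝ) 1) := HasDerivWithinAt.continuousOn hderiv'
  set A := ∫ x in (0:ℝ)..1, u x ^ 2
  set B := ∫ x in (0:ℝ)..1, u' x ^ 2
  set C := ∫ x in (0:ℝ)..1, u'' x ^ 2
  have hA : 0 ≤ A := integral_nonneg zero_le_one fun x _ => sq_nonneg _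
  have hB : 0 ≤ B := integral_nonneg zero_le_one fun x _ => sq_nonneg _
  have hexp : √(2 * (√A * √B) * B) = √2 * A ^ ((1:ℝ)/4) * B ^ ((3:ℝ)/4) := by
    rw [show (3:ℝ)/4 = 1/2 * (1/2) + 1/2 by norm_num, Real.rpow_add' hB (by norm_num),
      show (1:ℝ)/4 = 1/2 * (1/2) by norm_num, Real.rpow_mul hA, Real.rpow_mul hB]
    simp only [Real.sqrt_eq_rpow]
    rw [Real.mul_rpow (by positivity) hB, Real.mul_rpow (by positivity) (by positivity),
      Real.mul_rpow (Real.rpow_nonneg hA _) (Real.rpow_nonneg hB _)]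
    ring
  calc ∫ x in (0:ℝ)..1, u' x ^ 3 = -(2 * ∫ x in (0:ℝ)..1, u x * u' x * u'' x) :=
        integral_deriv_pow_three_eq zero_le_one hderiv hderiv' hcont h0 h1
    _ ≤ 2 * ∫ x in (0:ℝ)..1, |u x * u' x| * |u'' x| := by
        have := abs_integral_le_integral_abs (μ := volume)
          (f := fun x => u x * u' x * u'' x) zero_le_one
        simp only [abs_mul] at this ⊢
        linarith [neg_abs_le (∫ x in (0:ℝ)..1, u x * u' x * u'' x)]
    _ ≤ 2 * (√(∫ x in (0:ℝ)..1, (u x * u' x) ^ 2) * √C) := by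
        gcongr; exact integral_abs_mul_abs_le_sqrt_mul_sqrt zero_le_one (hu.mul hu') hcont
    _ ≤ 2 * (√(2 * (√A * √B) * B) * √C) := by
        gcongr; exact integral_sq_mul_deriv_sq_le zero_le_one hderiv hu' h0
    _ = _ := by rw [hexp, Real.sqrt_eq_rpow C]; ring
end

section
/- Let u : ℝ → ℝ be twice continuously differentiable on [0,1] with u(0) = 0 and u(1) = 0. Then (∫₀¹ u'(x)⁴ dx)^{1/2} ≤ 3√2 · (∫₀¹ u(x)² dx)^{1/4} · (∫₀¹ u'(x)² dx)^{1/4} · (∫₀¹ u''(x)² dx)^{1/2}. -/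
/-!
Integrating `(u u'³)' = u'⁴ + 3 u u'² u''` and using the boundary values gives
`∫ u'⁴ = -3 ∫ (u u'²) u''`, so by Cauchy–Schwarz `(∫ u'⁴)² ≤ 9 ∫ u² u'⁴ · ∫ u''²`.
Since `u(a) = 0`, `u(y)² = ∫ₐʸ 2 u u' ≤ 2 ∫ |u u'| ≤ 2 √(∫ u² · ∫ u'²)` (Cauchy–Schwarz again),
hence `∫ u² u'⁴ ≤ 2 √(∫ u² · ∫ u'²) · ∫ u'⁴`. Dividing by `∫ u'⁴` and taking square roots
gives the bound.
-/

open MeasureTheory Set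

theorem sq_integral_mul_le_integral_sq_mul_integral_sq {μ : Measure ℝ} {f g : ℝ → ℝ} {a b : ℝ}
    (hab : a ≤ b) (hf : IntervalIntegrable (fun x ↦ f x ^ 2) μ a b)
    (hg : IntervalIntegrable (fun x ↦ g x ^ 2) μ a b)
    (hfg : IntervalIntegrable (fun x ↦ f x * g x) μ a b) :
    (∫ x in a..b, f x * g x ∂μ) ^ 2 ≤ (∫ x in a..b, f x ^ 2 ∂μ) * ∫ x in a..b, g x ^ 2 ∂μ := by
  have hquad : ∀ t : ℝ, 0 ≤ (∫ x in a..b, g x ^ 2 ∂μ) * (t * t) +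
      (2 * ∫ x in a..b, f x * g x ∂μ) * t + ∫ x in a..b, f x ^ 2 ∂μ := fun t ↦ by
    have hexpand : ∫ x in a..b, (t * g x + f x) ^ 2 ∂μ =
        ∫ x in a..b, (g x ^ 2 * (t * t) + 2 * (f x * g x) * t + f x ^ 2) ∂μ :=
      intervalIntegral.integral_congr fun x _ ↦ by ring
    rw [intervalIntegral.integral_add ((hg.mul_const _).add ((hfg.const_mul 2).mul_const t)) hf,
      intervalIntegral.integral_add (hg.mul_const _) ((hfg.const_mul 2).mul_const t),
      intervalIntegral.integral_mul_const, intervalIntegral.integral_mul_const,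
      intervalIntegral.integral_const_mul] at hexpand
    exact hexpand ▸ intervalIntegral.integral_nonneg_of_forall hab fun _ ↦ sq_nonneg _
  have := discrim_le_zero hquad
  rw [discrim] at this
  nlinarith

theorem integral_abs_mul_le_sqrt {μ : Measure ℝ} {f g : ℝ → ℝ} {a b : ℝ}
    (hab : a ≤ b) (hf : IntervalIntegrable (fun x ↦ f x ^ 2) μ a b)
    (hg : IntervalIntegrable (fun x ↦ g x ^ 2) μ a b)
    (hfg : IntervalIntegrable (fun x ↦ f x * g x) μ a b) :
    ∫ x in a..b, |f x * g x| ∂μ ≤ √((∫ x in a..b, f x ^ 2 ∂μ) * ∫ x in a..b, g x ^ 2 ∂μ) := by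
  have h := sq_integral_mul_le_integral_sq_mul_integral_sq (f := fun x ↦ |f x|)
    (g := fun x ↦ |g x|) hab (by simpa only [sq_abs] using hf) (by simpa only [sq_abs] using hg)
    (by simpa only [abs_mul] using hfg.abs)
  simp only [sq_abs, ← abs_mul] at h
  exact (le_abs_self _).trans (Real.abs_le_sqrt h)

section

variable {u u' u'' : ℝ → ℝ} {a b : ℝ}

theorem integral_deriv_pow_four_eq (hab : a ≤ b)
    (hu : ∀ x ∈ Icc a b, HasDerivWithinAt u (u' x) (Icc a b) x)
    (hu' : ∀ x ∈ Icc a b, HasDerivWithinAt u' (u'' x) (Icc a b) x)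
    (hu'' : ContinuousOn u'' (Icc a b)) :
    ∫ x in a..b, u' x ^ 4 =
      u b * u' b ^ 3 - u a * u' a ^ 3 - 3 * ∫ x in a..b, u x * u' x ^ 2 * u'' x := by
  rw [← uIcc_of_le hab] at hu hu' hu''
  have hu'c : ContinuousOn u' (uIcc a b) := fun x hx ↦ (hu' x hx).continuousWithinAt
  have hcube : ∀ x ∈ uIcc a b,
      HasDerivWithinAt (fun y ↦ u' y ^ 3) (3 * u' x ^ 2 * u'' x) (uIcc a b) x :=
    fun x hx ↦ by simpa using (hu' x hx).fun_pow 3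
  have hparts := intervalIntegral.integral_mul_deriv_eq_deriv_mul_of_hasDerivWithinAt hu hcube
    hu'c.intervalIntegrable ((continuousOn_const.mul (hu'c.pow 2)).mul hu'').intervalIntegrable
  have h3 : ∫ x in a..b, u x * (3 * u' x ^ 2 * u'' x) =
      3 * ∫ x in a..b, u x * u' x ^ 2 * u'' x := by
    rw [← intervalIntegral.integral_const_mul]
    exact intervalIntegral.integral_congr fun x _ ↦ by ring
  have h4 : ∫ x in a..b, u' x * u' x ^ 3 = ∫ x in a..b, u' x ^ 4 :=
    intervalIntegral.integral_congr fun x _ ↦ by ring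
  linarith

theorem sq_le_two_mul_integral_abs_mul_deriv
    (hu : ∀ x ∈ Icc a b, HasDerivWithinAt u (u' x) (Icc a b) x)
    (hu'c : ContinuousOn u' (Icc a b)) (ha : u a = 0) {y : ℝ} (hy : y ∈ Icc a b) :
    u y ^ 2 ≤ 2 * ∫ x in a..b, |u x * u' x| := by
  have huc : ContinuousOn u (Icc a b) := fun x hx ↦ (hu x hx).continuousWithinAt
  have hsub : Icc a y ⊆ Icc a b := Icc_subset_Icc_right hy.2
  have hint : IntervalIntegrable (fun x ↦ 2 * (u x * u' x)) volume a b :=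
    (continuousOn_const.mul (huc.mul hu'c)).intervalIntegrable_of_Icc (hy.1.trans hy.2)
  have hftc : ∫ x in a..y, 2 * (u x * u' x) = u y ^ 2 := by
    rw [intervalIntegral.integral_eq_sub_of_hasDerivAt_of_le (f := fun x ↦ u x ^ 2) hy.1
      ((huc.mono hsub).pow 2)
      (fun x hx ↦ by
        simpa [mul_assoc] using ((hu x (hsub (Ioo_subset_Icc_self hx))).hasDerivAt
          (Icc_mem_nhds hx.1 (hx.2.trans_le hy.2))).fun_pow 2)
      (hint.mono_set (by simpa [uIcc_of_le hy.1, uIcc_of_le (hy.1.trans hy.2)] using hsub)),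
      ha, zero_pow two_ne_zero, sub_zero]
  calc u y ^ 2 = |∫ x in a..y, 2 * (u x * u' x)| := by rw [hftc, abs_of_nonneg (sq_nonneg _)]
    _ ≤ ∫ x in a..y, |2 * (u x * u' x)| := intervalIntegral.abs_integral_le_integral_abs hy.1
    _ ≤ ∫ x in a..b, |2 * (u x * u' x)| :=
      intervalIntegral.integral_mono_interval le_rfl hy.1 hy.2
        (ae_of_all _ fun _ ↦ abs_nonneg _) hint.abs
    _ = 2 * ∫ x in a..b, |u x * u' x| := by
      simp only [abs_mul, abs_two, intervalIntegral.integral_const_mul]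

theorem integral_deriv_pow_four_le (hab : a ≤ b)
    (hu : ∀ x ∈ Icc a b, HasDerivWithinAt u (u' x) (Icc a b) x)
    (hu' : ∀ x ∈ Icc a b, HasDerivWithinAt u' (u'' x) (Icc a b) x)
    (hu'' : ContinuousOn u'' (Icc a b)) (ha : u a = 0) (hb : u b = 0) :
    ∫ x in a..b, u' x ^ 4 ≤
      18 * √((∫ x in a..b, u x ^ 2) * ∫ x in a..b, u' x ^ 2) * ∫ x in a..b, u'' x ^ 2 := by
  have huc : ContinuousOn u (Icc a b) := fun x hx ↦ (hu x hx).continuousWithinAt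
  have hu'c : ContinuousOn u' (Icc a b) := fun x hx ↦ (hu' x hx).continuousWithinAt
  set M := 2 * √((∫ x in a..b, u x ^ 2) * ∫ x in a..b, u' x ^ 2) with hMdef
  have hparts := integral_deriv_pow_four_eq hab hu hu' hu''
  rw [ha, hb, zero_mul, zero_mul, sub_zero, zero_sub] at hparts
  have hcs := sq_integral_mul_le_integral_sq_mul_integral_sq (μ := volume)
    (f := fun x ↦ u x * u' x ^ 2) (g := u'') hab
    (((huc.mul (hu'c.pow 2)).pow 2).intervalIntegrable_of_Icc hab)
    ((hu''.pow 2).intervalIntegrable_of_Icc hab)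
    (((huc.mul (hu'c.pow 2)).mul hu'').intervalIntegrable_of_Icc hab)
  have hsup : ∀ y ∈ Icc a b, u y ^ 2 ≤ M := fun y hy ↦
    (sq_le_two_mul_integral_abs_mul_deriv hu hu'c ha hy).trans <| mul_le_mul_of_nonneg_left
      (integral_abs_mul_le_sqrt hab ((huc.pow 2).intervalIntegrable_of_Icc hab)
        ((hu'c.pow 2).intervalIntegrable_of_Icc hab) ((huc.mul hu'c).intervalIntegrable_of_Icc hab))
      zero_le_two
  have hweighted : ∫ x in a..b, (u x * u' x ^ 2) ^ 2 ≤ M * ∫ x in a..b, u' x ^ 4 := by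
    rw [← intervalIntegral.integral_const_mul]
    refine intervalIntegral.integral_mono_on hab
      (((huc.mul (hu'c.pow 2)).pow 2).intervalIntegrable_of_Icc hab)
      ((continuousOn_const.mul (hu'c.pow 4)).intervalIntegrable_of_Icc hab) fun x hx ↦ ?_
    calc (u x * u' x ^ 2) ^ 2 = u x ^ 2 * u' x ^ 4 := by ring
      _ ≤ M * u' x ^ 4 := by gcongr; exact hsup x hx
  have hB : 0 ≤ ∫ x in a..b, u'' x ^ 2 :=
    intervalIntegral.integral_nonneg_of_forall hab fun _ ↦ sq_nonneg _
  have hsq : (∫ x in a..b, u' x ^ 4) ^ 2 ≤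
      (9 * M * ∫ x in a..b, u'' x ^ 2) * ∫ x in a..b, u' x ^ 4 := by
    calc (∫ x in a..b, u' x ^ 4) ^ 2 = 9 * (∫ x in a..b, u x * u' x ^ 2 * u'' x) ^ 2 := by
          rw [hparts]; ring
      _ ≤ 9 * ((M * ∫ x in a..b, u' x ^ 4) * ∫ x in a..b, u'' x ^ 2) := by
          gcongr; exact hcs.trans (mul_le_mul_of_nonneg_right hweighted hB)
      _ = _ := by ring
  have hK : 0 ≤ 9 * M * ∫ x in a..b, u'' x ^ 2 := by positivity
  calc ∫ x in a..b, u' x ^ 4 ≤ 9 * M * ∫ x in a..b, u'' x ^ 2 := by nlinarith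
    _ = _ := by rw [hMdef]; ring

end

theorem rpow_half_le_of_le_mul_sqrt {A B X Y : ℝ} (hB : 0 ≤ B) (hX : 0 ≤ X) (hY : 0 ≤ Y)
    (h : A ≤ 18 * √(X * Y) * B) :
    A ^ ((1:ℝ)/2) ≤ 3 * √2 * X ^ ((1:ℝ)/4) * Y ^ ((1:ℝ)/4) * B ^ ((1:ℝ)/2) := by
  have hfourth {x : ℝ} (hx : 0 ≤ x) : (x ^ ((1:ℝ)/4)) ^ 2 = √x := by
    rw [← Real.rpow_mul_natCast hx, Real.sqrt_eq_rpow]; norm_num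
  rw [← Real.sqrt_eq_rpow, ← Real.sqrt_eq_rpow, Real.sqrt_le_iff]
  refine ⟨by positivity, h.trans_eq ?_⟩
  rw [mul_pow, mul_pow, mul_pow, mul_pow, hfourth hX, hfourth hY, Real.sq_sqrt hB,
    Real.sq_sqrt two_pos.le, Real.sqrt_mul hX]
  ring

/-- If `u` is twice continuously differentiable on `[0,1]` with `u 0 = 0` and `u 1 = 0`,
then `(∫₀¹ u'⁴)^{1/2} ≤ 3√2 (∫₀¹ u²)^{1/4} (∫₀¹ u'²)^{1/4} (∫₀¹ u''²)^{1/2}`. -/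
theorem integral_deriv_fourth_bound (u u' u'' : ℝ → ℝ)
    (hderiv : ∀ x ∈ Set.Icc (0:ℝ) 1, HasDerivWithinAt u (u' x) (Set.Icc (0:ℝ) 1) x)
    (hderiv' : ∀ x ∈ Set.Icc (0:ℝ) 1, HasDerivWithinAt u' (u'' x) (Set.Icc (0:ℝ) 1) x)
    (hcont : ContinuousOn u'' (Set.Icc (0:ℝ) 1))
    (h0 : u 0 = 0) (h1 : u 1 = 0) :
    (∫ x in (0:ℝ)..1, (u' x) ^ 4) ^ ((1:ℝ)/2) ≤
      3 * Real.sqrt 2 * (∫ x in (0:ℝ)..1, (u x) ^ 2) ^ ((1:ℝ)/4) *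
        (∫ x in (0:ℝ)..1, (u' x) ^ 2) ^ ((1:ℝ)/4) *
        (∫ x in (0:ℝ)..1, (u'' x) ^ 2) ^ ((1:ℝ)/2) :=
  rpow_half_le_of_le_mul_sqrt
    (intervalIntegral.integral_nonneg_of_forall zero_le_one fun _ ↦ sq_nonneg _)
    (intervalIntegral.integral_nonneg_of_forall zero_le_one fun _ ↦ sq_nonneg _)
    (intervalIntegral.integral_nonneg_of_forall zero_le_one fun _ ↦ sq_nonneg _)
    (integral_deriv_pow_four_le zero_le_one hderiv hderiv' hcont h0 h1)
end
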